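/- Let 𝒯 be a directed RTAS of width w and height h that uniquely self-assembles a pattern P, with coloring function f. If there are a color i and a position (x, y) with 3 ≤ x ≤ w and 3 ≤ y ≤ h such that P(x−2, y) = P(x−1, y) = P(x, y−1) = P(x, y−2) = i but P(x, y) ≠ i, then T contains at least two tile types of color i. -/
import Mathlib


/-- A tile type: a quadruple of glue labels (strings). -/
structure TileType where
  north : String
  west : String
  south : String
  east : String
deriving DecidableEq

/-- An assembly: a partial function from ℤ² to tile types. -/
abbrev Assembly := ℤ × ℤ → Option TileType

/-- A rectilinear tile assembly system (RTAS) of width `w ≥ 1` and height `h ≥ 1`: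
a finite set `T` of tile types, together with an L-shaped seed assembly `σ` whose
domain is `{(x,0) : 0 ≤ x ≤ w} ∪ {(0,y) : 0 ≤ y ≤ h}` and which uses tile types
not in `T`. (All glues have strength 1 and the temperature is 2; this is encoded
in the attachment rule below.) -/
structure RTAS where
  w : ℕ
  h : ℕ
  hw : 1 ≤ w
  hh : 1 ≤ h
  T : Finset TileType
  σ : Assembly
  seed_dom : ∀ p : ℤ × ℤ, (σ p).isSome ↔
      (0 ≤ p.1 ∧ p.1 ≤ (w : ℤ) ∧ p.2 = 0) ∨ (p.1 = 0 ∧ 0 ≤ p.2 ∧ p.2 ≤ (h : ℤ))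
  seed_not_in_T : ∀ p t, σ p = some t → t ∉ T

namespace RTAS

/-- A tile of type `t ∈ T` may attach to assembly `α` at position `p ∉ dom α`:
both the west neighbor and the south neighbor lie in `dom α`, the east glue of
the west neighbor equals `t.west`, and the north glue of the south neighbor
equals `t.south` (cooperation of two strength-1 glues at temperature 2). -/
def Attaches (S : RTAS) (α : Assembly) (p : ℤ × ℤ) (t : TileType) : Prop :=
  t ∈ S.T ∧ α p = none ∧
    ∃ tw ts : TileType,
      α (p.1 - 1, p.2) = some tw ∧ α (p.1, p.2 - 1) = some ts ∧
      tw.east = t.west ∧ ts.north = t.south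

/-- One-step growth: `β` is obtained from `α` by a single tile attachment. -/
def Step (S : RTAS) (α β : Assembly) : Prop :=
  ∃ p t, S.Attaches α p t ∧ β = Function.update α p (some t)

/-- An assembly is producible if it is obtained from the seed `σ` by a finite
sequence of single-tile attachments. -/
def Producible (S : RTAS) (α : Assembly) : Prop :=
  Relation.ReflTransGen S.Step S.σ α

/-- A producible assembly is terminal if no tile can attach to it. -/
def Terminal (S : RTAS) (α : Assembly) : Prop :=
  S.Producible α ∧ ∀ p t, ¬ S.Attaches α p t

/-- The RTAS is directed if any two producible assemblies have a common
producible extension. -/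
def IsDirected (S : RTAS) : Prop :=
  ∀ α β, S.Producible α → S.Producible β →
    ∃ γ, Relation.ReflTransGen S.Step α γ ∧ Relation.ReflTransGen S.Step β γ

/-- Every tile type of `T` appears in some producible assembly. -/
def UsesAllTiles (S : RTAS) : Prop :=
  ∀ t ∈ S.T, ∃ (α : Assembly) (p : ℤ × ℤ), S.Producible α ∧ α p = some t

/-- The domain `{0,…,w} × {0,…,h}` of a pattern of width `w` and height `h`. -/
def PatternDom (w h : ℕ) : Set (ℤ × ℤ) :=
  {p | 0 ≤ p.1 ∧ p.1 ≤ (w : ℤ) ∧ 0 ≤ p.2 ∧ p.2 ≤ (h : ℤ)}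

/-- `S` uniquely self-assembles the pattern `P` (of width `S.w` and height `S.h`)
with coloring function `f`: every terminal producible assembly `α` has domain
`dom P` and satisfies `f (α p) = P p` on it. -/
def UniquelySelfAssembles (S : RTAS) (P : ℤ × ℤ → ℕ) (f : TileType → ℕ) : Prop :=
  ∀ α, S.Terminal α →
    (∀ p : ℤ × ℤ, (α p).isSome ↔ p ∈ PatternDom S.w S.h) ∧
    (∀ p t, α p = some t → f t = P p)

end RTAS

namespace RTAS

lemma step_mono {S : RTAS} {α β : Assembly} (h : S.Step α β) {p : ℤ × ℤ} {t : TileType}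
    (hp : α p = some t) : β p = some t := by
  obtain ⟨q, u, ha, rfl⟩ := h
  rcases eq_or_ne p q with rfl | hne
  · rw [ha.2.1] at hp; cases hp
  · rwa [Function.update_of_ne hne]

lemma rtg_mono {S : RTAS} {α β : Assembly} (h : Relation.ReflTransGen S.Step α β)
    {p : ℤ × ℤ} {t : TileType} (hp : α p = some t) : β p = some t := by
  induction h with
  | refl => exact hp
  | tail _ hstep ih => exact step_mono hstep ih

lemma prod_dom {S : RTAS} {α : Assembly} (h : S.Producible α) :
    ∀ p : ℤ × ℤ, (α p).isSome → p ∈ PatternDom S.w S.h := by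
  induction h with
  | refl =>
    intro p hp
    rcases (S.seed_dom p).1 hp with ⟨h1, h2, h3⟩ | ⟨h1, h2, h3⟩
    · exact ⟨h1, h2, by omega, by omega⟩
    · exact ⟨by omega, by omega, h2, h3⟩
  | tail _ hstep ih =>
    obtain ⟨q, u, ha, rfl⟩ := hstep
    intro p hp
    rcases eq_or_ne p q with rfl | hne
    · obtain ⟨_, _, tw, ts, hw, hs, _, _⟩ := ha
      have h1 := ih _ (by rw [hw]; rfl)
      have h2 := ih _ (by rw [hs]; rfl)
      obtain ⟨a1, a2, a3, a4⟩ := h1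
      obtain ⟨b1, b2, b3, b4⟩ := h2
      exact ⟨by simp at a1 ⊢; omega, by simpa using b2, by simp at b3 ⊢; omega,
        by simpa using a4⟩
    · rw [Function.update_of_ne hne] at hp; exact ih p hp

lemma prod_inT {S : RTAS} {α : Assembly} (h : S.Producible α) :
    ∀ (p : ℤ × ℤ) (t : TileType), S.σ p = none → α p = some t → t ∈ S.T := by
  induction h with
  | refl => intro p t hσ hp; rw [hσ] at hp; cases hp
  | tail _ hstep ih =>
    intro p t hσ hp
    obtain ⟨q, u, ha, rfl⟩ := hstep
    rcases eq_or_ne p q with rfl | hne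
    · rw [Function.update_self] at hp; cases hp; exact ha.1
    · rw [Function.update_of_ne hne] at hp; exact ih p t hσ hp

lemma prod_glue {S : RTAS} {α : Assembly} (h : S.Producible α) :
    ∀ (p : ℤ × ℤ) (t : TileType), S.σ p = none → α p = some t →
      ∃ tw ts : TileType, α (p.1 - 1, p.2) = some tw ∧ α (p.1, p.2 - 1) = some ts ∧
        tw.east = t.west ∧ ts.north = t.south := by
  induction h with
  | refl => intro p t hσ hp; rw [hσ] at hp; cases hp
  | tail _ hstep ih =>
    intro p t hσ hp
    obtain ⟨q, u, ha, rfl⟩ := hstep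
    have hstep' : S.Step _ (Function.update _ q (some u)) := ⟨q, u, ha, rfl⟩
    rcases eq_or_ne p q with rfl | hne
    · rw [Function.update_self] at hp; cases hp
      obtain ⟨_, _, tw, ts, hw, hs, he, hn⟩ := ha
      exact ⟨tw, ts, step_mono hstep' hw, step_mono hstep' hs, he, hn⟩
    · rw [Function.update_of_ne hne] at hp
      obtain ⟨tw, ts, hw, hs, he, hn⟩ := ih p t hσ hp
      exact ⟨tw, ts, step_mono hstep' hw, step_mono hstep' hs, he, hn⟩

lemma prod_history {S : RTAS} {α : Assembly} (h : S.Producible α) :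
    ∀ (p : ℤ × ℤ) (t : TileType), S.σ p = none → α p = some t →
      ∃ β : Assembly, S.Producible β ∧ S.Attaches β p t ∧
        ∀ (q : ℤ × ℤ) (u : TileType), β q = some u → α q = some u := by
  induction h with
  | refl => intro p t hσ hp; rw [hσ] at hp; cases hp
  | tail hprev hstep ih =>
    intro p t hσ hp
    obtain ⟨q, u, ha, rfl⟩ := hstep
    have hstep' : S.Step _ (Function.update _ q (some u)) := ⟨q, u, ha, rfl⟩
    rcases eq_or_ne p q with rfl | hne
    · rw [Function.update_self] at hp; cases hp
      refine ⟨_, hprev, ha, fun r v hr => step_mono hstep' hr⟩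
    · rw [Function.update_of_ne hne] at hp
      obtain ⟨β, hβp, hβa, hsub⟩ := ih p t hσ hp
      exact ⟨β, hβp, hβa, fun r v hr => step_mono hstep' (hsub r v hr)⟩

/-- The finite bounding box. -/
noncomputable def box (S : RTAS) : Finset (ℤ × ℤ) :=
  Finset.Icc (0 : ℤ) (S.w : ℤ) ×ˢ Finset.Icc (0 : ℤ) (S.h : ℤ)

noncomputable def meas (S : RTAS) (α : Assembly) : ℕ :=
  (S.box.filter (fun p => (α p).isSome)).card

lemma mem_box_of_dom {S : RTAS} {p : ℤ × ℤ} (h : p ∈ PatternDom S.w S.h) : p ∈ S.box := by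
  obtain ⟨a, b, c, d⟩ := h
  simp [box, Finset.mem_Icc, a, b, c, d]

lemma exists_terminal_aux (S : RTAS) :
    ∀ (n : ℕ) (α : Assembly), S.Producible α → S.box.card ≤ S.meas α + n →
      ∃ β, S.Terminal β := by
  intro n
  induction n with
  | zero =>
    intro α hα hcard
    refine ⟨α, hα, fun p t hat => ?_⟩
    have hfull : S.box.filter (fun p => (α p).isSome) = S.box :=
      Finset.eq_of_subset_of_card_le (Finset.filter_subset _ _) (by simpa [meas] using hcard)
    -- p must be in the box
    have hβ : S.Producible (Function.update α p (some t)) := hα.tail ⟨p, t, hat, rfl⟩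
    have hpd : p ∈ PatternDom S.w S.h :=
      prod_dom hβ p (by rw [Function.update_self]; rfl)
    have : p ∈ S.box.filter (fun p => (α p).isSome) := by
      rw [hfull]; exact mem_box_of_dom hpd
    rw [Finset.mem_filter] at this
    rw [hat.2.1] at this
    exact absurd this.2 (by simp)
  | succ n ih =>
    intro α hα hcard
    by_cases hterm : ∀ p t, ¬ S.Attaches α p t
    · exact ⟨α, hα, hterm⟩
    · push_neg at hterm
      obtain ⟨p, t, hat⟩ := hterm
      set β := Function.update α p (some t) with hβdef
      have hβ : S.Producible β := hα.tail ⟨p, t, hat, rfl⟩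
      have hpd : p ∈ S.box := mem_box_of_dom
        (prod_dom hβ p (by rw [hβdef, Function.update_self]; rfl))
      have hsub : S.box.filter (fun q => (α q).isSome) ⊂ S.box.filter (fun q => (β q).isSome) := by
        constructor
        · intro q hq
          rw [Finset.mem_filter] at hq ⊢
          refine ⟨hq.1, ?_⟩
          obtain ⟨u, hu⟩ := Option.isSome_iff_exists.mp hq.2
          rw [hβdef, step_mono ⟨p, t, hat, rfl⟩ hu]; rfl
        · intro hsub'
          have hp : p ∈ S.box.filter (fun q => (β q).isSome) := by
            rw [Finset.mem_filter]
            exact ⟨hpd, by rw [hβdef, Function.update_self]; rfl⟩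
          have := Finset.mem_filter.mp (hsub' hp)
          rw [hat.2.1] at this
          exact absurd this.2 (by simp)
      have hlt : S.meas α < S.meas β := Finset.card_lt_card hsub
      exact ih β hβ (by unfold meas at hcard hlt ⊢; omega)

lemma exists_terminal (S : RTAS) : ∃ α, S.Terminal α :=
  S.exists_terminal_aux S.box.card S.σ Relation.ReflTransGen.refl (by omega)

end RTAS

/-- If a directed RTAS uniquely self-assembles `P` and at a position `(x,y)` we
have `P(x−2,y) = P(x−1,y) = P(x,y−1) = P(x,y−2) = i` but `P(x,y) ≠ i`, then at
least two tile types are colored `i`. -/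
theorem at_least_two_tiles_of_color_2 (S : RTAS) (hused : S.UsesAllTiles)
    (hdir : S.IsDirected) (P : ℤ × ℤ → ℕ) (f : TileType → ℕ)
    (hP : S.UniquelySelfAssembles P f)
    (i : ℕ) (x y : ℤ)
    (hx : 3 ≤ x) (hx' : x ≤ (S.w : ℤ)) (hy : 3 ≤ y) (hy' : y ≤ (S.h : ℤ))
    (h1 : P (x - 2, y) = i) (h2 : P (x - 1, y) = i)
    (h3 : P (x, y - 1) = i) (h4 : P (x, y - 2) = i)
    (hne : P (x, y) ≠ i) :
    2 ≤ (S.T.filter (fun t => f t = i)).card := by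
  classical
  by_contra hcard
  push_neg at hcard
  have hone : ∀ a ∈ S.T.filter (fun t => f t = i), ∀ b ∈ S.T.filter (fun t => f t = i), a = b :=
    Finset.card_le_one.mp (by omega)
  obtain ⟨α, hterm⟩ := S.exists_terminal
  obtain ⟨hdom, hcol⟩ := hP α hterm
  have hprod : S.Producible α := hterm.1
  -- seed is none at interior positions
  have hσnone : ∀ p : ℤ × ℤ, 1 ≤ p.1 → 1 ≤ p.2 → S.σ p = none := by
    intro p hp1 hp2
    rcases hσ : S.σ p with _ | t
    · rfl
    · have := (S.seed_dom p).1 (by rw [hσ]; rfl)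
      omega
  -- the five positions and their tiles
  have hmem : ∀ p : ℤ × ℤ, 1 ≤ p.1 → p.1 ≤ (S.w : ℤ) → 1 ≤ p.2 → p.2 ≤ (S.h : ℤ) →
      ∃ t, α p = some t ∧ f t = P p ∧ t ∈ S.T := by
    intro p a b c d
    have hps : (α p).isSome := (hdom p).2 ⟨by omega, b, by omega, d⟩
    obtain ⟨t, ht⟩ := Option.isSome_iff_exists.mp hps
    exact ⟨t, ht, hcol p t ht, S.prod_inT hprod p t (hσnone p a c) ht⟩
  obtain ⟨ta, hta, hfa, hTa⟩ := hmem (x - 2, y) (by omega) (by dsimp; omega) (by omega) (by simpa)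
  obtain ⟨tb, htb, hfb, hTb⟩ := hmem (x - 1, y) (by omega) (by dsimp; omega) (by omega) (by simpa)
  obtain ⟨tc, htc, hfc, hTc⟩ := hmem (x, y - 1) (by omega) (by simpa) (by omega) (by dsimp; omega)
  obtain ⟨td, htd, hfd, hTd⟩ := hmem (x, y - 2) (by omega) (by simpa) (by omega) (by dsimp; omega)
  obtain ⟨te, hte, hfe, hTe⟩ := hmem (x, y) (by omega) (by simpa) (by omega) (by simpa)
  have hmema : ta ∈ S.T.filter (fun t => f t = i) := Finset.mem_filter.mpr ⟨hTa, hfa.trans h1⟩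
  have hmemb : tb ∈ S.T.filter (fun t => f t = i) := Finset.mem_filter.mpr ⟨hTb, hfb.trans h2⟩
  have hmemc : tc ∈ S.T.filter (fun t => f t = i) := Finset.mem_filter.mpr ⟨hTc, hfc.trans h3⟩
  have hmemd : td ∈ S.T.filter (fun t => f t = i) := Finset.mem_filter.mpr ⟨hTd, hfd.trans h4⟩
  have heqa : ta = tb := hone _ hmema _ hmemb
  have heqc : tc = tb := hone _ hmemc _ hmemb
  have heqd : td = tb := hone _ hmemd _ hmemb
  -- glue equalities
  obtain ⟨tw, ts, hw1, hs1, he1, hn1⟩ :=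
    S.prod_glue hprod (x - 1, y) tb (hσnone _ (by omega) (by omega)) htb
  have hww : tw = tb := by
    have h' : α ((x - 1 : ℤ) - 1, y) = some ta := by
      convert hta using 2
      simp; ring
    rw [h'] at hw1; cases hw1; exact heqa
  have hew : tb.east = tb.west := hww ▸ he1
  obtain ⟨tw', ts', hw2, hs2, he2, hn2⟩ :=
    S.prod_glue hprod (x, y - 1) tc (hσnone _ (by omega) (by omega)) htc
  have hss : ts' = tb := by
    have h' : α (x, (y - 1 : ℤ) - 1) = some td := by
      convert htd using 2
      simp; ring
    rw [h'] at hs2; cases hs2; exact heqd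
  have hns : tb.north = tb.south := by rw [hss, heqc] at hn2; exact hn2
  -- history: just before te attached at (x,y)
  obtain ⟨β, hβprod, hβat, hβsub⟩ :=
    S.prod_history hprod (x, y) te (hσnone _ (by omega) (by omega)) hte
  obtain ⟨_, hβnone, tw'', ts'', hβw, hβs, _, _⟩ := hβat
  have hβw' : β (x - 1, y) = some tb := by
    have h' := hβsub _ _ hβw
    rw [show ((x, y).1 - 1, (x, y).2) = ((x - 1 : ℤ), y) from rfl] at h' hβw
    rw [htb] at h'; cases h'; exact hβw
  have hβs' : β (x, y - 1) = some tb := by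
    have h' := hβsub _ _ hβs
    rw [show ((x, y).1, (x, y).2 - 1) = (x, (y - 1 : ℤ)) from rfl] at h' hβs
    rw [htc] at h'; cases h'; rw [hβs, heqc]
  -- tb can attach at (x,y) to β
  have hatt : S.Attaches β (x, y) tb :=
    ⟨hTb, hβnone, tb, tb, hβw', hβs', hew, hns⟩
  have hγprod : S.Producible (Function.update β (x, y) (some tb)) :=
    hβprod.tail ⟨(x, y), tb, hatt, rfl⟩
  obtain ⟨δ, hδγ, hδα⟩ := hdir _ α hγprod hprod
  have hδeqα : δ = α := by
    rcases (Relation.ReflTransGen.cases_head hδα) with rfl | ⟨b, hb, _⟩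
    · rfl
    · obtain ⟨p, u, hu, _⟩ := hb
      exact absurd hu (hterm.2 p u)
  have hδt : δ (x, y) = some tb :=
    RTAS.rtg_mono hδγ (by rw [Function.update_self])
  rw [hδeqα, hte] at hδt
  cases hδt
  exact hne (by rw [← hfe, hfb, h2])
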